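/- arXiv:1609.07154 — 6 statements merged into one kernel-verified Lean document; each statement's English description precedes it below -/
import Mathlib

section
/- Let V be a real vector space, let a and b be symmetric bilinear forms on V, and let a_h be a bilinear form on V. Let λ, λ_h ∈ ℝ and w, w_h ∈ V be such that a(w, v) = λ·b(w, v) for all v ∈ V, b(w_h, w_h) = 1, and a_h(w_h, w_h) = λ_h. Then λ_h − λ = a(w − w_h, w − w_h) − λ·b(w − w_h, w − w_h) + a_h(w_h, w_h) − a(w_h, w_h). -/
/-- The algebraic identity at the core of the eigenvalue-error bound
(Corollary 3.3): if `a w v = λ * b w v` for all `v`, `b w_h w_h = 1` and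
`a_h w_h w_h = λ_h`, then
`λ_h − λ = a (w − w_h) (w − w_h) − λ b (w − w_h) (w − w_h) + a_h w_h w_h − a w_h w_h`. -/
theorem stmt_0 {V : Type*} [AddCommGroup V] [Module ℝ V]
    (a b : V →ₗ[ℝ] V →ₗ[ℝ] ℝ) (a_h : V →ₗ[ℝ] V →ₗ[ℝ] ℝ)
    (ha_symm : ∀ u v : V, a u v = a v u)
    (hb_symm : ∀ u v : V, b u v = b v u)
    (lam lam_h : ℝ) (w w_h : V)
    (hw : ∀ v : V, a w v = lam * b w v)
    (hnorm : b w_h w_h = 1)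
    (hwh : a_h w_h w_h = lam_h) :
    lam_h - lam =
      a (w - w_h) (w - w_h) - lam * b (w - w_h) (w - w_h)
        + a_h w_h w_h - a w_h w_h := by
  simp only [map_sub, LinearMap.sub_apply]
  rw [ha_symm w_h w, hb_symm w_h w, hw w, hw w_h, hnorm, hwh]
  ring
end

section
/- Let V be a real vector space, let a be a symmetric positive semidefinite bilinear form on V, and let Π : V → V be a linear map with Π ∘ Π = Π such that a(v − Πv, Πu) = 0 for all u, v ∈ V. Let S be a symmetric bilinear form on V and let c₁ ≥ 0 be such that 0 ≤ S(u, u) ≤ c₁·a(u, u) for every u ∈ V with Πu = 0. Define a_h(u, v) := a(Πu, Πv) + S(u − Πu, v − Πv). Then for every v ∈ V, |a_h(v, v) − a(v, v)| ≤ (1 + c₁)·a(v − Πv, v − Πv). -/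
/-- Bound on the consistency error `|a_h(v, v) − a(v, v)|` of the VEM bilinear
form `a_h(u, v) = a(Πu, Πv) + S(u − Πu, v − Πv)` (from the proof of
Corollary 3.3). -/
theorem stmt_3 {V : Type*} [AddCommGroup V] [Module ℝ V]
    (a : V →ₗ[ℝ] V →ₗ[ℝ] ℝ)
    (ha_symm : ∀ u v : V, a u v = a v u)
    (ha_pos : ∀ v : V, 0 ≤ a v v)
    (P : V →ₗ[ℝ] V) (hP : ∀ v : V, P (P v) = P v)
    (horth : ∀ u v : V, a (v - P v) (P u) = 0)
    (S : V →ₗ[ℝ] V →ₗ[ℝ] ℝ)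
    (hS_symm : ∀ u v : V, S u v = S v u)
    (c₁ : ℝ) (hc₁ : 0 ≤ c₁)
    (hS : ∀ u : V, P u = 0 → 0 ≤ S u u ∧ S u u ≤ c₁ * a u u)
    (a_h : V → V → ℝ)
    (ha_h : ∀ u v : V, a_h u v = a (P u) (P v) + S (u - P u) (v - P v)) :
    ∀ v : V, |a_h v v - a v v| ≤ (1 + c₁) * a (v - P v) (v - P v) := by
  intro v
  set e := v - P v with he
  have hPe : P e = 0 := by simp [he, map_sub, hP]
  obtain ⟨hS0, hS1⟩ := hS e hPe
  have hee : 0 ≤ a e e := ha_pos e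
  have horth1 : a e (P v) = 0 := horth v v
  have hsplit : a v v = a (P v) (P v) + a e e := by
    have : v = P v + e := by simp [he]
    calc a v v = a (P v + e) (P v + e) := by rw [← this]
      _ = a (P v) (P v) + a (P v) e + (a e (P v) + a e e) := by
          simp [map_add]; ring
      _ = a (P v) (P v) + a e e := by
          rw [horth1, ha_symm (P v) e, horth1]; ring
  have hdiff : a_h v v - a v v = S e e - a e e := by
    rw [ha_h, hsplit]; ring
  rw [hdiff, abs_le]
  constructor <;> nlinarith
end

section
/- Let V be a real vector space, let a be a symmetric positive semidefinite bilinear form on V, and let Π : V → V be a linear map with Π ∘ Π = Π such that a(v − Πv, Πu) = 0 for all u, v ∈ V. Let S be a symmetric bilinear form on V and let 0 ≤ c₀ ≤ c₁ be such that c₀·a(u, u) ≤ S(u, u) ≤ c₁·a(u, u) for every u ∈ V with Πu = 0. Define a_h(u, v) := a(Πu, Πv) + S(u − Πu, v − Πv). Then for every v ∈ V, min(1, c₀)·a(v, v) ≤ a_h(v, v) ≤ max(1, c₁)·a(v, v). -/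
/-- Stability property (2.5)/(3.4): the VEM bilinear form
`a_h(u, v) = a(Πu, Πv) + S(u − Πu, v − Πv)` is spectrally equivalent to `a`. -/
theorem stmt_4 {V : Type*} [AddCommGroup V] [Module ℝ V]
    (a : V →ₗ[ℝ] V →ₗ[ℝ] ℝ)
    (ha_symm : ∀ u v : V, a u v = a v u)
    (ha_pos : ∀ v : V, 0 ≤ a v v)
    (P : V →ₗ[ℝ] V) (hP : ∀ v : V, P (P v) = P v)
    (horth : ∀ u v : V, a (v - P v) (P u) = 0)
    (S : V →ₗ[ℝ] V →ₗ[ℝ] ℝ)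
    (hS_symm : ∀ u v : V, S u v = S v u)
    (c₀ c₁ : ℝ) (hc₀ : 0 ≤ c₀) (hc₀₁ : c₀ ≤ c₁)
    (hS : ∀ u : V, P u = 0 → c₀ * a u u ≤ S u u ∧ S u u ≤ c₁ * a u u)
    (a_h : V → V → ℝ)
    (ha_h : ∀ u v : V, a_h u v = a (P u) (P v) + S (u - P u) (v - P v)) :
    ∀ v : V, min 1 c₀ * a v v ≤ a_h v v ∧ a_h v v ≤ max 1 c₁ * a v v := by
  intro v
  have hw : P (v - P v) = 0 := by simp [map_sub, hP]
  have h1 : a (v - P v) (P v) = 0 := horth v v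
  have h2 : a (P v) (v - P v) = 0 := by rw [ha_symm]; exact h1
  have hsplit : a v v = a (P v) (P v) + a (v - P v) (v - P v) := by
    have hv : v = P v + (v - P v) := by abel
    calc a v v = a (P v + (v - P v)) (P v + (v - P v)) := by rw [← hv]
    _ = a (P v) (P v) + a (P v) (v - P v) + (a (v - P v) (P v) + a (v - P v) (v - P v)) := by
        simp only [map_add, LinearMap.add_apply]; ring
    _ = a (P v) (P v) + a (v - P v) (v - P v) := by rw [h1, h2]; ring
  obtain ⟨hl, hr⟩ := hS (v - P v) hw
  have hp := ha_pos (P v)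
  have hw2 := ha_pos (v - P v)
  have hmin1 : min 1 c₀ ≤ 1 := min_le_left _ _
  have hmin2 : min 1 c₀ ≤ c₀ := min_le_right _ _
  have hmax1 : (1:ℝ) ≤ max 1 c₁ := le_max_left _ _
  have hmax2 : c₁ ≤ max 1 c₁ := le_max_right _ _
  rw [ha_h, hsplit]
  constructor <;> nlinarith
end

section
/- Let V be a real vector space, let a and b be symmetric positive semidefinite bilinear forms on V, and let Π : V → V be a linear map with Π ∘ Π = Π such that a(v − Πv, Πu) = 0 for all u, v ∈ V. Let S be a symmetric bilinear form on V and let c₁ ≥ 0 be such that 0 ≤ S(u, u) ≤ c₁·a(u, u) for every u ∈ V with Πu = 0, and define a_h(u, v) := a(Πu, Πv) + S(u − Πu, v − Πv). Let λ ≥ 0, λ_h ∈ ℝ and w, w_h ∈ V satisfy a(w, v) = λ·b(w, v) for all v ∈ V, b(w_h, w_h) = 1, and a_h(w_h, w_h) = λ_h. Then, writing e := w − w_h, one has |λ − λ_h| ≤ a(e, e) + λ·b(e, e) + (1 + c₁)·a(w_h − Πw_h, w_h − Πw_h). -/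
/-- Abstract content of Corollary 3.3: the eigenvalue error `|λ − λ_h|` is
bounded by the squared eigenfunction error plus the virtual inconsistency
term. -/
theorem stmt_5 {V : Type*} [AddCommGroup V] [Module ℝ V]
    (a b : V →ₗ[ℝ] V →ₗ[ℝ] ℝ)
    (ha_symm : ∀ u v : V, a u v = a v u)
    (hb_symm : ∀ u v : V, b u v = b v u)
    (ha_pos : ∀ v : V, 0 ≤ a v v)
    (hb_pos : ∀ v : V, 0 ≤ b v v)
    (P : V →ₗ[ℝ] V) (hP : ∀ v : V, P (P v) = P v)
    (horth : ∀ u v : V, a (v - P v) (P u) = 0)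
    (S : V →ₗ[ℝ] V →ₗ[ℝ] ℝ)
    (hS_symm : ∀ u v : V, S u v = S v u)
    (c₁ : ℝ) (hc₁ : 0 ≤ c₁)
    (hS : ∀ u : V, P u = 0 → 0 ≤ S u u ∧ S u u ≤ c₁ * a u u)
    (a_h : V → V → ℝ)
    (ha_h : ∀ u v : V, a_h u v = a (P u) (P v) + S (u - P u) (v - P v))
    (lam lam_h : ℝ) (hlam : 0 ≤ lam) (w w_h : V)
    (hw : ∀ v : V, a w v = lam * b w v)
    (hnorm : b w_h w_h = 1)
    (hwh : a_h w_h w_h = lam_h) :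
    |lam - lam_h| ≤
      a (w - w_h) (w - w_h) + lam * b (w - w_h) (w - w_h)
        + (1 + c₁) * a (w_h - P w_h) (w_h - P w_h) := by
  set d := w_h - P w_h with hd
  have hd0 : P d = 0 := by simp [hd, map_sub, hP]
  have hSd := hS d hd0
  have hexp_a : a (w - w_h) (w - w_h) = a w w - a w w_h - a w_h w + a w_h w_h := by
    simp [map_sub, LinearMap.sub_apply]; ring
  have hexp_b : b (w - w_h) (w - w_h) = b w w - b w w_h - b w_h w + b w_h w_h := by
    simp [map_sub, LinearMap.sub_apply]; ring
  have key1 : a (w - w_h) (w - w_h) - lam * b (w - w_h) (w - w_h)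
      = a w_h w_h - lam := by
    rw [hexp_a, hexp_b, ha_symm w_h w, hb_symm w_h w, hw w, hw w_h, hnorm]; ring
  have horth1 : a d (P w_h) = 0 := horth w_h w_h
  have horth2 : a (P w_h) d = 0 := by rw [ha_symm]; exact horth1
  have key2 : a w_h w_h = a (P w_h) (P w_h) + a d d := by
    have h1 : a w_h w_h = a (P w_h + d) (P w_h + d) := by
      congr 2 <;> simp [hd]
    rw [h1]
    simp only [map_add, LinearMap.add_apply, horth1, horth2]
    ring
  have key3 : lam_h = a (P w_h) (P w_h) + S d d := by
    rw [← hwh, ha_h]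
  have had := ha_pos d
  have hae := ha_pos (w - w_h)
  have hbe := mul_nonneg hlam (hb_pos (w - w_h))
  rw [abs_le]
  constructor <;> nlinarith [hSd.1, hSd.2]
end

section
/- For every k ∈ ℕ there exists a constant C > 0 such that for every nondegenerate triangle T ⊂ ℝ² (the convex hull of three affinely independent points p₀, p₁, p₂) and every real polynomial q in two variables of total degree at most k, C⁻¹ ∫_T q² ≤ ∫_T ψ_T q² ≤ ∫_T q², where ψ_T := 27 λ₀ λ₁ λ₂ is the interior (cubic) bubble function of T, λ₀, λ₁, λ₂ being the barycentric coordinate functions of T, and the integrals are taken with respect to two-dimensional Lebesgue measure restricted to T. -/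
/-!
The affine map sending the reference triangle `{x₀, x₁ ≥ 0, x₀ + x₁ ≤ 1}` onto `T` pulls
`λ₀, λ₁, λ₂` back to `1 - x₀ - x₁, x₀, x₁`, hence `ψ_T` back to the fixed bubble
`27 (1 - x₀ - x₁) x₀ x₁`, and polynomials of degree `≤ k` back to polynomials of degree `≤ k`.
Both integrals acquire the same Jacobian factor, so it suffices to work on the reference triangle.
There the upper bound is `ψ ≤ 1` (AM–GM). For the lower bound, `q ↦ ∫ ψ q²` is positive definite
on the finite-dimensional space of polynomials of degree `≤ k`, because a nonzero polynomial
cannot vanish on the open triangle where `ψ > 0`; by compactness of the unit sphere it dominates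
`q ↦ ∫ q²` up to a constant.
-/

open MeasureTheory Set MvPolynomial

theorem exists_le_mul_of_homogeneous {V : Type*} [NormedAddCommGroup V] [NormedSpace ℝ V]
    [ProperSpace V] {f g : V → ℝ} (hf : Continuous f) (hg : Continuous g)
    (hf_smul : ∀ (a : ℝ) (v : V), f (a • v) = a ^ 2 * f v)
    (hg_smul : ∀ (a : ℝ) (v : V), g (a • v) = a ^ 2 * g v)
    (hg_pos : ∀ v, v ≠ 0 → 0 < g v) : ∃ C, 0 < C ∧ ∀ v, f v ≤ C * g v := by
  have hg_sphere : ∀ u ∈ Metric.sphere (0 : V) 1, 0 < g u := fun u hu =>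
    hg_pos u (ne_zero_of_mem_unit_sphere ⟨u, hu⟩)
  obtain ⟨B, hB⟩ := (isCompact_sphere (0 : V) 1).bddAbove_image
    (hf.continuousOn.div hg.continuousOn fun u hu => (hg_sphere u hu).ne')
  refine ⟨max B 1, by positivity, fun v => ?_⟩
  rcases eq_or_ne v 0 with rfl | hv
  · simp [show f 0 = 0 by simpa using hf_smul 0 0, show g 0 = 0 by simpa using hg_smul 0 0]
  set u := ‖v‖⁻¹ • v with hu_def
  have hu : u ∈ Metric.sphere (0 : V) 1 := by simp [hu_def, norm_smul, hv]
  have hfu : f u ≤ max B 1 * g u := by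
    have hgu := hg_sphere u hu
    have : f u / g u ≤ B := hB ⟨u, hu, rfl⟩
    rw [div_le_iff₀ hgu] at this
    nlinarith [le_max_left B 1]
  have hv_eq : v = ‖v‖ • u := by simp [hu_def, smul_smul, hv]
  rw [hv_eq, hf_smul, hg_smul]
  nlinarith [sq_nonneg ‖v‖]

theorem MvPolynomial.continuous_eval_euclidean {σ : Type*} (p : MvPolynomial σ ℝ) :
    Continuous fun x : EuclideanSpace ℝ σ => eval (fun i => x i) p :=
  (continuous_eval p).comp (PiLp.continuous_ofLp 2 _)

theorem MvPolynomial.exists_mem_eval_ne_zero_of_isOpen {σ : Type*} [Fintype σ]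
    {p : MvPolynomial σ ℝ} (hp : p ≠ 0) {U : Set (EuclideanSpace ℝ σ)} (hU : IsOpen U)
    (hU_ne : U.Nonempty) :
    ∃ x ∈ U, eval (fun i => x i) p ≠ 0 := by
  by_contra! h
  obtain ⟨x₀, hx₀⟩ := hU_ne
  have h_zero : EqOn (fun x : EuclideanSpace ℝ σ => eval (fun i => x i) p) 0 univ :=
    (AnalyticOnNhd.eval_continuousLinearMap (EuclideanSpace.equiv σ ℝ).toContinuousLinearMap p
      ).eqOn_zero_of_preconnected_of_eventuallyEq_zero isPreconnected_univ (mem_univ x₀)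
      (Filter.eventually_of_mem (hU.mem_nhds hx₀) h)
  exact hp (MvPolynomial.funext fun y => by simpa using h_zero (mem_univ (WithLp.toLp 2 y)))

theorem setIntegral_pos_of_isOpen_subset {X : Type*} [TopologicalSpace X] [MeasurableSpace X]
    [OpensMeasurableSpace X] {μ : Measure X} [μ.IsOpenPosMeasure] {s U : Set X} {h : X → ℝ}
    (hs : MeasurableSet s) (h_int : IntegrableOn h s μ) (h_nonneg : ∀ x ∈ s, 0 ≤ h x)
    (hU : IsOpen U) (hUs : U ⊆ s) (h_cont : ContinuousOn h U) {x₀ : X} (hx₀ : x₀ ∈ U)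
    (h_ne : h x₀ ≠ 0) : 0 < ∫ x in s, h x ∂μ := by
  rw [setIntegral_pos_iff_support_of_nonneg_ae
    ((ae_restrict_iff' hs).2 (ae_of_all _ h_nonneg)) h_int]
  calc (0 : ENNReal) < μ (U ∩ h ⁻¹' {0}ᶜ) :=
        (h_cont.isOpen_inter_preimage hU isOpen_compl_singleton).measure_pos μ ⟨x₀, hx₀, h_ne⟩
    _ ≤ μ (Function.support h ∩ s) := measure_mono fun x hx => ⟨hx.2, hUs hx.1⟩

theorem AffineMap.integral_image_eq_abs_det_smul {E F : Type*} [NormedAddCommGroup E]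
    [NormedSpace ℝ E] [FiniteDimensional ℝ E] [MeasurableSpace E] [BorelSpace E]
    [NormedAddCommGroup F] [NormedSpace ℝ F] (μ : Measure E) [μ.IsAddHaarMeasure]
    (A : E →ᵃ[ℝ] E) {s : Set E} (hs : MeasurableSet s) (hA : InjOn A s) (g : E → F) :
    ∫ x in A '' s, g x ∂μ = |LinearMap.det A.linear| • ∫ x in s, g (A x) ∂μ := by
  let A' : E →ᴬ[ℝ] E := ⟨A, A.continuous_of_finiteDimensional⟩
  exact (integral_image_eq_integral_abs_det_fderiv_smul μ hs (fun x _ => A'.hasFDerivWithinAt)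
    hA g).trans (integral_smul _ _)

theorem MvPolynomial.totalDegree_bind₁_le {σ τ R : Type*} [CommSemiring R]
    {f : σ → MvPolynomial τ R} (hf : ∀ i, (f i).totalDegree ≤ 1) (q : MvPolynomial σ R) :
    (bind₁ f q).totalDegree ≤ q.totalDegree := by
  rw [bind₁, aeval_def, eval₂_eq]
  refine (totalDegree_finsetSum _ _).trans (Finset.sup_le fun d hd => ?_)
  refine (totalDegree_mul _ _).trans ?_
  rw [algebraMap_eq, totalDegree_C, zero_add]
  calc (∏ i ∈ d.support, f i ^ d i).totalDegree
      ≤ ∑ i ∈ d.support, (f i ^ d i).totalDegree := totalDegree_finsetProd _ _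
    _ ≤ ∑ i ∈ d.support, d i := Finset.sum_le_sum fun i _ =>
        (totalDegree_pow _ _).trans (mul_le_of_le_one_right (Nat.zero_le _) (hf i))
    _ ≤ q.totalDegree := le_totalDegree hd

theorem AffineMap.apply_eq_sum_euclidean {σ τ : Type*} [Fintype σ]
    (A : EuclideanSpace ℝ σ →ᵃ[ℝ] EuclideanSpace ℝ τ) (x : EuclideanSpace ℝ σ) (j : τ) :
    A x j = A 0 j + ∑ i, x i * A.linear (EuclideanSpace.basisFun σ ℝ i) j := by
  have hx : x = ∑ i, x i • EuclideanSpace.basisFun σ ℝ i := by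
    simpa using ((EuclideanSpace.basisFun σ ℝ).sum_repr x).symm
  have h := A.map_vadd 0 x
  rw [vadd_eq_add, vadd_eq_add, add_zero] at h
  rw [h]
  conv_lhs => rw [hx]
  simp [add_comm]

theorem MvPolynomial.exists_totalDegree_le_eval_comp_affineMap {σ τ : Type*} [Fintype σ]
    (A : EuclideanSpace ℝ σ →ᵃ[ℝ] EuclideanSpace ℝ τ) (q : MvPolynomial τ ℝ) :
    ∃ q' : MvPolynomial σ ℝ, q'.totalDegree ≤ q.totalDegree ∧
      ∀ x, eval (fun i => x i) q' = eval (fun j => A x j) q := by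
  set f : τ → MvPolynomial σ ℝ := fun j =>
    C (A 0 j) + ∑ i, C (A.linear (EuclideanSpace.basisFun σ ℝ i) j) * X i
  have hf : ∀ j, (f j).totalDegree ≤ 1 := fun j =>
    (totalDegree_add _ _).trans <| max_le (by simp) <|
      (totalDegree_finsetSum _ _).trans <| Finset.sup_le fun i _ =>
        (totalDegree_mul _ _).trans (by simp)
  refine ⟨bind₁ f q, totalDegree_bind₁_le hf q, fun x => ?_⟩
  have h : eval (fun i => x i) (bind₁ f q) = eval (fun j => eval (fun i => x i) (f j)) q :=
    eval₂Hom_bind₁ _ _ _ _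
  rw [h]
  congr 2 with j
  simp [f, A.apply_eq_sum_euclidean x j, mul_comm]

namespace InteriorBubble

local notation "ℝ²" => EuclideanSpace ℝ (Fin 2)

def refTriangle : Set ℝ² := {x | 0 ≤ x 0 ∧ 0 ≤ x 1 ∧ x 0 + x 1 ≤ 1}

def refBubble (x : ℝ²) : ℝ := 27 * (1 - x 0 - x 1) * x 0 * x 1

noncomputable def refVertex : Fin 3 → ℝ² :=
  ![0, EuclideanSpace.single 0 1, EuclideanSpace.single 1 1]

theorem convex_refTriangle : Convex ℝ refTriangle := by
  rintro x ⟨hx0, hx1, hx2⟩ y ⟨hy0, hy1, hy2⟩ a b ha hb hab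
  refine ⟨?_, ?_, ?_⟩ <;> simp only [PiLp.add_apply, PiLp.smul_apply, smul_eq_mul] <;> nlinarith

theorem convexHull_refVertex : convexHull ℝ (range refVertex) = refTriangle := by
  refine (convexHull_min (range_subset_iff.2 fun i => ?_) convex_refTriangle).antisymm ?_
  · fin_cases i <;> simp [refVertex, refTriangle]
  rintro x ⟨hx0, hx1, hx2⟩
  have hx : x = ∑ i, ![1 - x 0 - x 1, x 0, x 1] i • refVertex i := by
    ext i; fin_cases i <;> simp [refVertex, Fin.sum_univ_three]
  rw [hx]
  refine (convex_convexHull ℝ _).sum_mem (fun i _ => ?_) (by simp [Fin.sum_univ_three]; ring)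
    fun i _ => subset_convexHull ℝ _ (mem_range_self i)
  fin_cases i <;> dsimp <;> linarith

theorem isCompact_refTriangle : IsCompact refTriangle := by
  rw [← convexHull_refVertex]
  exact (finite_range refVertex).isCompact_convexHull ℝ

theorem measurableSet_refTriangle : MeasurableSet refTriangle :=
  isCompact_refTriangle.isClosed.measurableSet

theorem continuous_refBubble : Continuous refBubble := by
  unfold refBubble; fun_prop

theorem refBubble_nonneg {x : ℝ²} (hx : x ∈ refTriangle) : 0 ≤ refBubble x := by
  obtain ⟨h0, h1, h2⟩ := hx
  have : 0 ≤ 1 - x 0 - x 1 := by linarith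
  unfold refBubble; positivity

theorem refBubble_le_one {x : ℝ²} (hx : x ∈ refTriangle) : refBubble x ≤ 1 := by
  obtain ⟨h0, h1, h2⟩ := hx
  have h3 : 0 ≤ 1 - x 0 - x 1 := by linarith
  unfold refBubble
  nlinarith [sq_nonneg (x 0 - x 1), sq_nonneg (x 0 + x 1 - 2 * (1 - x 0 - x 1)),
    mul_nonneg h0 h1, mul_nonneg h0 h3, mul_nonneg h1 h3]

theorem integral_refBubble_mul_sq_pos {p : MvPolynomial (Fin 2) ℝ} (hp : p ≠ 0) :
    0 < ∫ x in refTriangle, refBubble x * eval (fun i => x i) p ^ 2 := by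
  set U : Set ℝ² := {x | 0 < x 0 ∧ 0 < x 1 ∧ x 0 + x 1 < 1}
  have hU : IsOpen U := by
    have h0 : Continuous fun x : ℝ² => x 0 := by fun_prop
    have h1 : Continuous fun x : ℝ² => x 1 := by fun_prop
    exact (isOpen_lt continuous_const h0).inter
      ((isOpen_lt continuous_const h1).inter (isOpen_lt (h0.add h1) continuous_const))
  obtain ⟨x₀, hx₀, hpx₀⟩ := exists_mem_eval_ne_zero_of_isOpen hp hU
    ⟨!₂[1 / 4, 1 / 4], by norm_num [U]⟩
  have h_cont := continuous_refBubble.mul ((continuous_eval_euclidean p).pow 2)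
  have hψ₀ : 0 < refBubble x₀ := by
    obtain ⟨h0, h1, h2⟩ := hx₀
    have : 0 < 1 - x₀ 0 - x₀ 1 := by linarith
    unfold refBubble; positivity
  exact setIntegral_pos_of_isOpen_subset measurableSet_refTriangle
    (h_cont.continuousOn.integrableOn_compact isCompact_refTriangle)
    (fun x hx => mul_nonneg (refBubble_nonneg hx) (sq_nonneg _)) hU
    (fun x hx => ⟨hx.1.le, hx.2.1.le, hx.2.2.le⟩) h_cont.continuousOn hx₀
    (mul_ne_zero hψ₀.ne' (pow_ne_zero 2 hpx₀))

theorem integral_refBubble_mul_le {f : ℝ² → ℝ} (hf : Continuous f)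
    (hf_nonneg : ∀ x, 0 ≤ f x) :
    ∫ x in refTriangle, refBubble x * f x ≤ ∫ x in refTriangle, f x :=
  setIntegral_mono_on
    ((continuous_refBubble.mul hf).continuousOn.integrableOn_compact isCompact_refTriangle)
    (hf.continuousOn.integrableOn_compact isCompact_refTriangle) measurableSet_refTriangle
    fun x hx => mul_le_of_le_one_left (hf_nonneg x) (refBubble_le_one hx)

theorem exists_integral_sq_le_mul_integral_refBubble_mul_sq (k : ℕ) :
    ∃ C, 0 < C ∧ ∀ q : MvPolynomial (Fin 2) ℝ, q.totalDegree ≤ k →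
      ∫ x in refTriangle, eval (fun i => x i) q ^ 2
        ≤ C * ∫ x in refTriangle, refBubble x * eval (fun i => x i) q ^ 2 := by
  -- Coordinates in a basis of the polynomials of degree `≤ k` make both integrals continuous,
  -- 2-homogeneous functions on a finite-dimensional normed space.
  let b := Module.finBasis ℝ (restrictTotalDegree (Fin 2) ℝ k)
  let P := (restrictTotalDegree (Fin 2) ℝ k).subtype ∘ₗ b.equivFun.symm.toLinearMap
  have hP_inj : Function.Injective P := Subtype.val_injective.comp b.equivFun.symm.injective
  have hP_cont : Continuous fun cx : _ × ℝ² => eval (fun i => cx.2 i) (P cx.1) := by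
    have hP_eval : ∀ c (x : ℝ²),
        eval (fun i => x i) (P c) = ∑ j, c j * eval (fun i => x i) (b j) := by
      simp [P, b.equivFun_symm_apply, smul_eval]
    simp only [hP_eval]
    exact continuous_finsetSum _ fun j _ => ((continuous_apply j).comp continuous_fst).mul
      ((continuous_eval_euclidean (b j : MvPolynomial (Fin 2) ℝ)).comp continuous_snd)
  let W (w : ℝ² → ℝ) c := ∫ x in refTriangle, w x * eval (fun i => x i) (P c) ^ 2
  have hW_cont : ∀ w, Continuous w → Continuous (W w) := fun w hw =>
    continuous_parametric_integral_of_continuous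
      ((hw.comp continuous_snd).mul (hP_cont.pow 2)) isCompact_refTriangle
  have hW_smul : ∀ w (a : ℝ) c, W w (a • c) = a ^ 2 * W w c := fun w a c => by
    simp only [W, map_smul, smul_eval, ← integral_const_mul]
    congr with x
    ring
  obtain ⟨C, hC, hle⟩ := exists_le_mul_of_homogeneous (hW_cont 1 continuous_const)
    (hW_cont refBubble continuous_refBubble) (hW_smul 1) (hW_smul refBubble)
    fun c hc => integral_refBubble_mul_sq_pos ((map_ne_zero_iff P hP_inj).2 hc)
  refine ⟨C, hC, fun q hq => ?_⟩
  obtain ⟨c, rfl⟩ : ∃ c, P c = q :=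
    ⟨b.equivFun ⟨q, (mem_restrictTotalDegree _ _ _).2 hq⟩, by simp [P]⟩
  simpa [W] using hle c

noncomputable def refMap (p : Fin 3 → ℝ²) : ℝ² →ᵃ[ℝ] ℝ² where
  toFun x := p 0 + x 0 • (p 1 - p 0) + x 1 • (p 2 - p 0)
  linear := (EuclideanSpace.proj (0 : Fin 2) : ℝ² →L[ℝ] ℝ).toLinearMap.smulRight (p 1 - p 0) +
    (EuclideanSpace.proj (1 : Fin 2) : ℝ² →L[ℝ] ℝ).toLinearMap.smulRight (p 2 - p 0)
  map_vadd' x v := by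
    simp only [vadd_eq_add, PiLp.add_apply, add_smul, LinearMap.add_apply,
      LinearMap.coe_smulRight, ContinuousLinearMap.coe_coe, PiLp.proj_apply]
    abel

theorem refMap_apply (p : Fin 3 → ℝ²) (x : ℝ²) :
    refMap p x = p 0 + x 0 • (p 1 - p 0) + x 1 • (p 2 - p 0) := rfl

theorem refMap_comp_refVertex (p : Fin 3 → ℝ²) : refMap p ∘ refVertex = p := by
  ext i : 1
  fin_cases i <;> simp [refMap_apply, refVertex]

theorem image_refMap_refTriangle (p : Fin 3 → ℝ²) :
    refMap p '' refTriangle = convexHull ℝ (range p) := by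
  rw [← convexHull_refVertex, AffineMap.image_convexHull, ← range_comp, refMap_comp_refVertex]

theorem apply_refMap (f : ℝ² →ᵃ[ℝ] ℝ) (p : Fin 3 → ℝ²) (x : ℝ²) :
    f (refMap p x) = (1 - x 0 - x 1) * f (p 0) + x 0 * f (p 1) + x 1 * f (p 2) := by
  have h := f.map_vadd (p 0) (x 0 • (p 1 - p 0) + x 1 • (p 2 - p 0))
  rw [vadd_eq_add, vadd_eq_add, add_comm, ← add_assoc] at h
  rw [refMap_apply, h, map_add, map_smul, map_smul, ← vsub_eq_sub, ← vsub_eq_sub,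
    f.linearMap_vsub, f.linearMap_vsub]
  simp only [vsub_eq_sub, smul_eq_mul]
  ring

section Barycentric

variable {p : Fin 3 → ℝ²} {lam : Fin 3 → (ℝ² →ᵃ[ℝ] ℝ)}

theorem barycentric_refMap (hlam : ∀ i j, lam i (p j) = if i = j then 1 else 0) (x : ℝ²) :
    lam 0 (refMap p x) = 1 - x 0 - x 1 ∧ lam 1 (refMap p x) = x 0 ∧
      lam 2 (refMap p x) = x 1 := by
  simp [apply_refMap, hlam]

theorem injective_refMap (hlam : ∀ i j, lam i (p j) = if i = j then 1 else 0) :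
    Function.Injective (refMap p) := fun x y hxy => by
  obtain ⟨-, hx1, hx2⟩ := barycentric_refMap hlam x
  obtain ⟨-, hy1, hy2⟩ := barycentric_refMap hlam y
  ext i
  fin_cases i
  · simpa [← hx1, ← hy1] using congrArg (lam 1) hxy
  · simpa [← hx2, ← hy2] using congrArg (lam 2) hxy

theorem bubble_refMap (hlam : ∀ i j, lam i (p j) = if i = j then 1 else 0) (x : ℝ²) :
    27 * lam 0 (refMap p x) * lam 1 (refMap p x) * lam 2 (refMap p x) = refBubble x := by
  obtain ⟨h0, h1, h2⟩ := barycentric_refMap hlam x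
  rw [h0, h1, h2, refBubble]

theorem integral_convexHull_eq_mul_integral_refTriangle
    (hlam : ∀ i j, lam i (p j) = if i = j then 1 else 0) (g : ℝ² → ℝ) :
    ∫ x in convexHull ℝ (range p), g x
      = |LinearMap.det (refMap p).linear| * ∫ x in refTriangle, g (refMap p x) := by
  rw [← image_refMap_refTriangle, AffineMap.integral_image_eq_abs_det_smul volume (refMap p)
    measurableSet_refTriangle (injective_refMap hlam).injOn, smul_eq_mul]

end Barycentric

end InteriorBubble

open InteriorBubble

/-- Lemma 3.1 (interior bubble functions), first estimate, triangle form: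
for every degree `k` there is `C > 0` such that for every nondegenerate
triangle `T = conv{p₀, p₁, p₂} ⊆ ℝ²` with barycentric coordinates `lam i`
and every bivariate polynomial `q` of total degree at most `k`,
`C⁻¹ ∫_T q² ≤ ∫_T ψ_T q² ≤ ∫_T q²`, where `ψ_T = 27 λ₀ λ₁ λ₂`. -/
theorem stmt_6 (k : ℕ) :
    ∃ C : ℝ, 0 < C ∧
      ∀ p : Fin 3 → EuclideanSpace ℝ (Fin 2),
        AffineIndependent ℝ p →
        ∀ lam : Fin 3 → (EuclideanSpace ℝ (Fin 2) →ᵃ[ℝ] ℝ),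
          (∀ i j, lam i (p j) = if i = j then 1 else 0) →
          ∀ q : MvPolynomial (Fin 2) ℝ, q.totalDegree ≤ k →
            (C⁻¹ * ∫ x in convexHull ℝ (Set.range p),
                (MvPolynomial.eval (fun i => x i) q) ^ 2
              ≤ ∫ x in convexHull ℝ (Set.range p),
                  (27 * lam 0 x * lam 1 x * lam 2 x)
                    * (MvPolynomial.eval (fun i => x i) q) ^ 2)
            ∧ (∫ x in convexHull ℝ (Set.range p),
                  (27 * lam 0 x * lam 1 x * lam 2 x)
                    * (MvPolynomial.eval (fun i => x i) q) ^ 2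
              ≤ ∫ x in convexHull ℝ (Set.range p),
                  (MvPolynomial.eval (fun i => x i) q) ^ 2) := by
  obtain ⟨C, hC, h_ref⟩ := exists_integral_sq_le_mul_integral_refBubble_mul_sq k
  refine ⟨C, hC, fun p _ lam hlam q hq => ?_⟩
  obtain ⟨q', hq'_deg, hq'⟩ := exists_totalDegree_le_eval_comp_affineMap (refMap p) q
  simp only [integral_convexHull_eq_mul_integral_refTriangle hlam, bubble_refMap hlam, ← hq']
  refine ⟨?_, mul_le_mul_of_nonneg_left (integral_refBubble_mul_le
    ((continuous_eval_euclidean q').pow 2) fun x => sq_nonneg _) (abs_nonneg _)⟩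
  rw [inv_mul_le_iff₀ hC, mul_left_comm]
  exact mul_le_mul_of_nonneg_left (h_ref q' (hq'_deg.trans hq)) (abs_nonneg _)
end

section
/- For every k ∈ ℕ there exists a constant C > 0 such that for all real numbers a < b and every real polynomial q in one variable of degree at most k, C⁻¹ ∫_a^b q(t)² dt ≤ ∫_a^b ψ(t) q(t)² dt ≤ ∫_a^b q(t)² dt, where ψ(t) := 4(t − a)(b − t)/(b − a)² is the quadratic edge bubble function of the interval [a, b]. -/
open MeasureTheory intervalIntegral

namespace Stmt8Aux

open Polynomial Set Function

/-- Evaluation of a coefficient vector as a polynomial. -/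
noncomputable def pev (k : ℕ) (c : Fin (k+1) → ℝ) (s : ℝ) : ℝ :=
  ∑ i : Fin (k+1), c i * s ^ (i : ℕ)

lemma continuous_pev2 (k : ℕ) :
    Continuous (fun p : (Fin (k+1) → ℝ) × ℝ => pev k p.1 p.2) := by
  unfold pev
  exact continuous_finset_sum _ fun i _ =>
    ((continuous_apply i).comp continuous_fst).mul (continuous_snd.pow _)

lemma continuous_pev (k : ℕ) (c : Fin (k+1) → ℝ) : Continuous (pev k c) :=
  (continuous_pev2 k).comp (Continuous.prodMk_right c)

lemma pev_smul (k : ℕ) (t : ℝ) (c : Fin (k+1) → ℝ) (s : ℝ) :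
    pev k (t • c) s = t * pev k c s := by
  unfold pev
  rw [Finset.mul_sum]
  refine Finset.sum_congr rfl fun i _ => ?_
  simp [mul_assoc]

noncomputable def Fk (k : ℕ) (c : Fin (k+1) → ℝ) : ℝ :=
  ∫ s in (0:ℝ)..1, 4 * s * (1 - s) * (pev k c s) ^ 2

noncomputable def Gk (k : ℕ) (c : Fin (k+1) → ℝ) : ℝ :=
  ∫ s in (0:ℝ)..1, (pev k c s) ^ 2

lemma Fk_nonneg (k : ℕ) (c : Fin (k+1) → ℝ) : 0 ≤ Fk k c := by
  apply intervalIntegral.integral_nonneg (by norm_num)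
  intro s hs
  exact mul_nonneg (mul_nonneg (by linarith [hs.1]) (by linarith [hs.2])) (sq_nonneg _)

lemma Gk_nonneg (k : ℕ) (c : Fin (k+1) → ℝ) : 0 ≤ Gk k c := by
  apply intervalIntegral.integral_nonneg (by norm_num)
  intro s _
  exact sq_nonneg _

lemma continuous_Fk (k : ℕ) : Continuous (Fk k) := by
  have hf : Continuous (Function.uncurry
      (fun (c : Fin (k+1) → ℝ) (s : ℝ) => 4 * s * (1 - s) * (pev k c s) ^ 2)) := by
    have : Continuous (fun p : (Fin (k+1) → ℝ) × ℝ =>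
        4 * p.2 * (1 - p.2) * (pev k p.1 p.2) ^ 2) :=
      (((continuous_const.mul continuous_snd).mul
        (continuous_const.sub continuous_snd)).mul ((continuous_pev2 k).pow 2))
    exact this
  exact continuous_parametric_intervalIntegral_of_continuous' hf 0 1

lemma continuous_Gk (k : ℕ) : Continuous (Gk k) := by
  have hf : Continuous (Function.uncurry
      (fun (c : Fin (k+1) → ℝ) (s : ℝ) => (pev k c s) ^ 2)) := by
    have : Continuous (fun p : (Fin (k+1) → ℝ) × ℝ => (pev k p.1 p.2) ^ 2) :=
      (continuous_pev2 k).pow 2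
    exact this
  exact continuous_parametric_intervalIntegral_of_continuous' hf 0 1

lemma Fk_smul (k : ℕ) (t : ℝ) (c : Fin (k+1) → ℝ) :
    Fk k (t • c) = t ^ 2 * Fk k c := by
  unfold Fk
  rw [← intervalIntegral.integral_const_mul]
  refine intervalIntegral.integral_congr fun s _ => ?_
  rw [pev_smul]; ring

lemma Gk_smul (k : ℕ) (t : ℝ) (c : Fin (k+1) → ℝ) :
    Gk k (t • c) = t ^ 2 * Gk k c := by
  unfold Gk
  rw [← intervalIntegral.integral_const_mul]
  refine intervalIntegral.integral_congr fun s _ => ?_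
  rw [pev_smul]; ring

lemma Fk_pos (k : ℕ) (c : Fin (k+1) → ℝ) (hc : c ≠ 0) : 0 < Fk k c := by
  classical
  set P : Polynomial ℝ := ∑ i : Fin (k+1), Polynomial.C (c i) * Polynomial.X ^ (i : ℕ) with hPdef
  have hPe : ∀ s, P.eval s = pev k c s := by
    intro s; simp [hPdef, pev, Polynomial.eval_finset_sum]
  have hPcoeff : ∀ j : Fin (k+1), P.coeff (j : ℕ) = c j := by
    intro j
    rw [hPdef, Polynomial.finset_sum_coeff]
    have : ∀ i : Fin (k+1),
        (Polynomial.C (c i) * Polynomial.X ^ (i : ℕ)).coeff (j : ℕ)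
          = if i = j then c i else 0 := by
      intro i
      rw [Polynomial.coeff_C_mul, Polynomial.coeff_X_pow]
      rcases eq_or_ne i j with h | h
      · simp [h]
      · have hv : (j : ℕ) ≠ (i : ℕ) := fun hh => h (Fin.val_injective hh.symm)
        simp [hv, h]
    simp only [this]
    simp
  have hP : P ≠ 0 := by
    intro h
    apply hc
    funext j
    have := hPcoeff j
    rw [h] at this
    simpa using this.symm
  -- The zero set of P restricted is finite
  have hZfin : ({s : ℝ | P.eval s = 0}).Finite := Polynomial.finite_setOf_isRoot hP
  set f : ℝ → ℝ := fun s => 4 * s * (1 - s) * (pev k c s) ^ 2 with hfdef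
  have hfc : Continuous f := by
    exact (((continuous_const.mul continuous_id).mul
      (continuous_const.sub continuous_id)).mul ((continuous_pev k c).pow 2))
  have hfi : IntervalIntegrable f volume 0 1 := hfc.intervalIntegrable _ _
  have hnn : 0 ≤ᵐ[volume.restrict (Set.uIoc (0:ℝ) 1)] f := by
    rw [Set.uIoc_of_le (by norm_num : (0:ℝ) ≤ 1)]
    refine (ae_restrict_iff' measurableSet_Ioc).2 (ae_of_all _ fun s hs => ?_)
    show (0:ℝ) ≤ f s
    exact mul_nonneg (mul_nonneg (by linarith [hs.1.le]) (by linarith [hs.2])) (sq_nonneg _)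
  have key : 0 < Fk k c := by
    rw [show Fk k c = ∫ s in (0:ℝ)..1, f s from rfl]
    rw [intervalIntegral.integral_pos_iff_support_of_nonneg_ae' hnn hfi]
    refine ⟨by norm_num, ?_⟩
    have hsub : Set.Ioc (0:ℝ) 1 \ ({s : ℝ | P.eval s = 0} ∪ {1})
        ⊆ Function.support f ∩ Set.Ioc 0 1 := by
      rintro s ⟨hs, hns⟩
      refine ⟨?_, hs⟩
      simp only [Set.mem_union, Set.mem_setOf_eq, Set.mem_singleton_iff, not_or] at hns
      have h0 : 0 < s := hs.1
      have h1 : s < 1 := lt_of_le_of_ne hs.2 hns.2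
      have hne : pev k c s ≠ 0 := by rw [← hPe]; exact hns.1
      have : 0 < f s :=
        mul_pos (mul_pos (by linarith) (by linarith)) (sq_pos_iff.2 hne)
      exact this.ne'
    calc (0 : ENNReal) < volume (Set.Ioc (0:ℝ) 1 \ ({s : ℝ | P.eval s = 0} ∪ {1})) := by
          rw [measure_diff_null]
          · simp
          · exact measure_union_null (hZfin.measure_zero _)
              ((Set.finite_singleton _).measure_zero _)
      _ ≤ volume (Function.support f ∩ Set.Ioc 0 1) := measure_mono hsub
  exact key

lemma unit_key (k : ℕ) : ∃ C : ℝ, 0 < C ∧ ∀ c : Fin (k+1) → ℝ, Gk k c ≤ C * Fk k c := by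
  have hne : (Metric.sphere (0 : Fin (k+1) → ℝ) 1).Nonempty :=
    NormedSpace.sphere_nonempty.2 zero_le_one
  obtain ⟨cF, hcF, hminF⟩ := (isCompact_sphere (0 : Fin (k+1) → ℝ) 1).exists_isMinOn
    hne (continuous_Fk k).continuousOn
  obtain ⟨cG, hcG, hmaxG⟩ := (isCompact_sphere (0 : Fin (k+1) → ℝ) 1).exists_isMaxOn
    hne (continuous_Gk k).continuousOn
  set m := Fk k cF with hm
  set M := Gk k cG with hM
  have hcF0 : cF ≠ 0 := by
    intro h
    rw [Metric.mem_sphere, h] at hcF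
    simp at hcF
  have hmpos : 0 < m := Fk_pos k cF hcF0
  have hMnn : 0 ≤ M := Gk_nonneg k cG
  refine ⟨max (M / m) 1, lt_of_lt_of_le one_pos (le_max_right _ _), fun c => ?_⟩
  by_cases h0 : c = 0
  · have : Gk k c = 0 := by
      subst h0
      unfold Gk
      simp [pev]
    rw [this]
    exact mul_nonneg (le_trans zero_le_one (le_max_right _ _)) (Fk_nonneg k c)
  · set t := ‖c‖ with ht
    have htpos : 0 < t := norm_pos_iff.2 h0
    set u := t⁻¹ • c with hu
    have huS : u ∈ Metric.sphere (0 : Fin (k+1) → ℝ) 1 := by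
      rw [Metric.mem_sphere, dist_zero_right, hu, norm_smul, norm_inv, norm_norm]
      exact inv_mul_cancel₀ htpos.ne'
    have hcu : c = t • u := by
      rw [hu, smul_smul, mul_inv_cancel₀ htpos.ne', one_smul]
    have hG : Gk k c = t ^ 2 * Gk k u := by rw [hcu, Gk_smul]
    have hF : Fk k c = t ^ 2 * Fk k u := by rw [hcu, Fk_smul]
    have hGu : Gk k u ≤ M := isMaxOn_iff.1 hmaxG u huS
    have hFu : m ≤ Fk k u := isMinOn_iff.1 hminF u huS
    have ht2 : (0:ℝ) ≤ t ^ 2 := sq_nonneg _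
    have step : Gk k c ≤ (M / m) * Fk k c := by
      rw [hG, hF]
      have h1 : t ^ 2 * Gk k u ≤ t ^ 2 * M := mul_le_mul_of_nonneg_left hGu ht2
      have h2 : (M / m) * (t ^ 2 * m) ≤ (M / m) * (t ^ 2 * Fk k u) :=
        mul_le_mul_of_nonneg_left (mul_le_mul_of_nonneg_left hFu ht2)
          (div_nonneg hMnn hmpos.le)
      have h3 : (M / m) * (t ^ 2 * m) = t ^ 2 * M := by
        field_simp
      linarith
    calc Gk k c ≤ (M / m) * Fk k c := step
      _ ≤ max (M / m) 1 * Fk k c :=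
        mul_le_mul_of_nonneg_right (le_max_left _ _) (Fk_nonneg k c)

end Stmt8Aux

open Stmt8Aux

/-- Lemma 3.2 (edge bubble functions), first estimate, one-dimensional form:
for every degree `k` there is `C > 0` such that for every interval `[a, b]`
and every univariate polynomial `q` of degree at most `k`,
`C⁻¹ ∫_a^b q² ≤ ∫_a^b ψ q² ≤ ∫_a^b q²`,
where `ψ(t) = 4 (t − a)(b − t)/(b − a)²` is the quadratic edge bubble. -/
theorem stmt_8 (k : ℕ) :
    ∃ C : ℝ, 0 < C ∧
      ∀ a b : ℝ, a < b →
        ∀ q : Polynomial ℝ, q.natDegree ≤ k →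
          (C⁻¹ * ∫ t in a..b, (q.eval t) ^ 2
            ≤ ∫ t in a..b, (4 * (t - a) * (b - t) / (b - a) ^ 2) * (q.eval t) ^ 2)
          ∧ (∫ t in a..b, (4 * (t - a) * (b - t) / (b - a) ^ 2) * (q.eval t) ^ 2
            ≤ ∫ t in a..b, (q.eval t) ^ 2) := by
  obtain ⟨C, hC, hkey⟩ := unit_key k
  refine ⟨C, hC, fun a b hab q hq => ?_⟩
  have hba : (0:ℝ) < b - a := sub_pos.2 hab
  have hqc : Continuous fun t : ℝ => (q.eval t) ^ 2 := (q.continuous).pow 2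
  have hpsic : Continuous fun t : ℝ =>
      (4 * (t - a) * (b - t) / (b - a) ^ 2) * (q.eval t) ^ 2 := by
    exact (((continuous_const.mul (continuous_id.sub continuous_const)).mul
      (continuous_const.sub continuous_id)).div_const _).mul hqc
  constructor
  · -- lower bound
    set q' : Polynomial ℝ := q.comp (Polynomial.C a + Polynomial.C (b - a) * Polynomial.X)
      with hq'def
    have hq' : q'.natDegree ≤ k := by
      have hd : (Polynomial.C a + Polynomial.C (b - a) * Polynomial.X).natDegree ≤ 1 := by
        compute_degree
      calc q'.natDegree ≤ q.natDegree *
            (Polynomial.C a + Polynomial.C (b - a) * Polynomial.X).natDegree :=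
            Polynomial.natDegree_comp_le
        _ ≤ q.natDegree * 1 := Nat.mul_le_mul_left _ hd
        _ = q.natDegree := mul_one _
        _ ≤ k := hq
    set c : Fin (k+1) → ℝ := fun i => q'.coeff i with hcdef
    have heval : ∀ s : ℝ, q'.eval s = pev k c s := by
      intro s
      rw [Polynomial.eval_eq_sum_range' (lt_of_le_of_lt hq' (Nat.lt_succ_self k)) s]
      exact (Fin.sum_univ_eq_sum_range (fun i => q'.coeff i * s ^ i) (k+1)).symm
    have hevq : ∀ s : ℝ, q.eval (a + (b - a) * s) = pev k c s := by
      intro s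
      rw [← heval s, hq'def, Polynomial.eval_comp]
      simp
    have hsub : ∀ g : ℝ → ℝ, (∫ t in a..b, g t)
        = (b - a) * ∫ s in (0:ℝ)..1, g ((b - a) * s + a) := by
      intro g
      rw [intervalIntegral.integral_comp_mul_add g hba.ne' a]
      rw [smul_eq_mul, ← mul_assoc, mul_inv_cancel₀ hba.ne', one_mul]
      norm_num
    have hGG : (∫ t in a..b, (q.eval t) ^ 2) = (b - a) * Gk k c := by
      rw [hsub fun t => (q.eval t) ^ 2]
      congr 1
      refine intervalIntegral.integral_congr fun s _ => ?_
      rw [show (b - a) * s + a = a + (b - a) * s from by ring, hevq s]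
    have hFF : (∫ t in a..b, (4 * (t - a) * (b - t) / (b - a) ^ 2) * (q.eval t) ^ 2)
        = (b - a) * Fk k c := by
      rw [hsub fun t => (4 * (t - a) * (b - t) / (b - a) ^ 2) * (q.eval t) ^ 2]
      congr 1
      refine intervalIntegral.integral_congr fun s _ => ?_
      rw [show (b - a) * s + a = a + (b - a) * s from by ring, hevq s]
      have hne : (b - a) ≠ 0 := hba.ne'
      field_simp
      ring
    rw [hGG, hFF, inv_mul_le_iff₀ hC]
    nlinarith [hkey c, Fk_nonneg k c, mul_le_mul_of_nonneg_left (hkey c) hba.le]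
  · -- upper bound
    refine intervalIntegral.integral_mono_on hab.le (hpsic.intervalIntegrable _ _)
      (hqc.intervalIntegrable _ _) fun t ht => ?_
    have hpsi : 4 * (t - a) * (b - t) / (b - a) ^ 2 ≤ 1 := by
      rw [div_le_one (by positivity)]
      nlinarith [ht.1, ht.2, sq_nonneg ((t - a) - (b - t))]
    exact mul_le_of_le_one_left (sq_nonneg _) hpsi
end
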